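/- Let D and B be finite-dimensional division algebras over ℚ with centers F and K respectively, and suppose ι : D → B is an embedding of ℚ-algebras. Then the compositum F̃ = ι(F)K (the subalgebra of B generated by ι(F) and K) is a field, and ι extends to an embedding of K-algebras ι̃ : D ⊗_F F̃ → B, i.e., an injective K-linear ring homomorphism with ι̃(x ⊗ 1) = ι(x) for all x ∈ D. -/
import Mathlib


open scoped TensorProduct

universe u

/-- Two `F`-algebras are Brauer equivalent (define the same class in `Br(F)`) if they become
isomorphic as `F`-algebras after passing to matrix algebras. -/
def BrauerEquiv (F : Type*) [Field F] (A : Type*) [Ring A] [Algebra F A]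
    (B : Type*) [Ring B] [Algebra F B] : Prop :=
  ∃ n m : ℕ, 0 < n ∧ 0 < m ∧
    Nonempty (Matrix (Fin n) (Fin n) A ≃ₐ[F] Matrix (Fin m) (Fin m) B)

/-- An `F`-algebra is split (trivial in `Br(F)`) if it is a matrix algebra over `F`. -/
def IsSplitAlgebra (F : Type*) [Field F] (A : Type*) [Ring A] [Algebra F A] : Prop :=
  ∃ n : ℕ, 0 < n ∧ Nonempty (A ≃ₐ[F] Matrix (Fin n) (Fin n) F)

/-- `m` is the order of the class `[A]` in `Br(F)` (for a central simple `F`-algebra `A`,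
its Schur index): the least positive integer such that the `m`-th tensor power of `A`
over `F` is split. -/
noncomputable def IsBrauerOrder (F : Type*) [Field F] (A : Type*) [Ring A] [Algebra F A]
    (m : ℕ) : Prop :=
  0 < m ∧ IsSplitAlgebra F (⨂[F] _ : Fin m, A) ∧
    ∀ k : ℕ, 0 < k → k < m → ¬ IsSplitAlgebra F (⨂[F] _ : Fin k, A)

/-- `c` is the capacity of the simple algebra `A`: by Wedderburn's structure theorem,
`A ≃ Mat_c(X')` for a division ring `X'`. -/
def IsCapacity (A : Type*) [Ring A] (c : ℕ) : Prop :=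
  0 < c ∧ ∃ (X' : Type u) (_ : DivisionRing X'),
    Nonempty (A ≃+* Matrix (Fin c) (Fin c) X')

set_option maxHeartbeats 1600000 in
set_option synthInstance.maxHeartbeats 400000 in
theorem extension_of_scalars_embedding
    (D B F K : Type*) [DivisionRing D] [DivisionRing B] [Field F] [Field K]
    [Algebra F D] [Algebra.IsCentral F D] [Algebra K B] [Algebra.IsCentral K B]
    [Algebra ℚ D] [Algebra ℚ B] [Algebra ℚ F] [Algebra ℚ K]
    [IsScalarTower ℚ F D] [IsScalarTower ℚ K B]
    [FiniteDimensional ℚ D] [FiniteDimensional ℚ B]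
    (ι : D →ₐ[ℚ] B) (hι : Function.Injective ι)
    (Ftil : Subalgebra K B)
    (hFtil : Ftil = Algebra.adjoin K (Set.range fun x : F => ι (algebraMap F D x))) :
    -- the compositum `ι(F)K` is a field
    IsField Ftil ∧
    -- `Ftil` carries an `F`-algebra structure via `ι`, and `ι` extends to an injective
    -- `K`-linear ring homomorphism `D ⊗[F] Ftil → B` sending `x ⊗ 1` to `ι x`
    ∃ _ : Algebra F Ftil,
      (∀ x : F, (algebraMap F Ftil x : B) = ι (algebraMap F D x)) ∧
      ∃ ιtil : (D ⊗[F] Ftil) →+* B, Function.Injective ιtil ∧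
        (∀ x : D, ιtil (x ⊗ₜ[F] (1 : Ftil)) = ι x) ∧
        (∀ (k : K) (z : D ⊗[F] Ftil),
          ιtil (((1 : D) ⊗ₜ[F] algebraMap K Ftil k) * z) = algebraMap K B k * ιtil z) := by
  classical
  -- every element of Ftil commutes with ι(D)
  have hcent : ∀ t ∈ Ftil, ∀ d : D, ι d * t = t * ι d := by
    intro t ht d
    rw [hFtil] at ht
    induction ht using Algebra.adjoin_induction with
    | mem x hx =>
      obtain ⟨y, rfl⟩ := hx
      rw [← map_mul, ← map_mul, Algebra.commutes]
    | algebraMap k => exact (Algebra.commutes k (ι d)).symm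
    | add x y hx hy ihx ihy => rw [mul_add, add_mul, ihx, ihy]
    | mul x y hx hy ihx ihy => rw [← mul_assoc, ihx, mul_assoc, ihy, mul_assoc]
  -- Ftil is commutative
  have hcomm2 : ∀ s ∈ Ftil, ∀ t ∈ Ftil, s * t = t * s := by
    intro s hs t ht
    rw [hFtil] at hs
    induction hs using Algebra.adjoin_induction with
    | mem x hx =>
      obtain ⟨y, rfl⟩ := hx
      exact hcent t ht _
    | algebraMap k => exact Algebra.commutes k t
    | add x y hx hy ihx ihy => rw [add_mul, mul_add, ihx, ihy]
    | mul x y hx hy ihx ihy => rw [mul_assoc, ihy, ← mul_assoc, ihx, mul_assoc]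
  have hmemF : ∀ x : F, ι (algebraMap F D x) ∈ Ftil := fun x => by
    rw [hFtil]; exact Algebra.subset_adjoin ⟨x, rfl⟩
  constructor
  -- ################ Ftil is a field ################
  · have hval : Function.Injective (fun t : Ftil => (t : B)) := Subtype.coe_injective
    letI : FiniteDimensional ℚ Ftil := by
      refine FiniteDimensional.of_injective
        (⟨⟨fun t : Ftil => (t : B), fun x y => rfl⟩, fun c x => rfl⟩ : Ftil →ₗ[ℚ] B) hval
    refine ⟨⟨0, 1, fun h => ?_⟩, fun a b => Subtype.ext (hcomm2 a a.2 b b.2), ?_⟩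
    · exact zero_ne_one (congrArg (fun t : Ftil => (t : B)) h)
    · intro a ha
      have haB : (a : B) ≠ 0 := fun h => ha (Subtype.ext h)
      have hinj : Function.Injective (LinearMap.mulLeft ℚ a) := by
        intro x y hxy
        exact Subtype.ext (mul_left_cancel₀ haB (congrArg (fun t : Ftil => (t : B)) hxy))
      obtain ⟨b, hb⟩ := LinearMap.surjective_of_injective hinj 1
      exact ⟨b, hb⟩
  -- ################ the extension ################
  · let f0 : F →+* B := ι.toRingHom.comp (algebraMap F D)
    letI algF : Algebra F Ftil :=
      RingHom.toAlgebra' (f0.codRestrict Ftil hmemF)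
        (fun c x => Subtype.ext (hcomm2 _ (hmemF c) _ x.2))
    have halg : ∀ x : F, ((algebraMap F Ftil x : Ftil) : B) = ι (algebraMap F D x) := fun x => rfl
    have hsmul : ∀ (c : F) (t : Ftil), ((c • t : Ftil) : B) = ι (algebraMap F D c) * t := by
      intro c t
      rw [Algebra.smul_def]
      rfl
    -- ########## key linear independence claim ##########
    let bV := Module.Basis.ofVectorSpace F Ftil
    have hli : LinearIndependent F (⇑bV) := bV.linearIndependent
    set 𝒞 : Module.Basis.ofVectorSpaceIndex F Ftil → Ftil := ⇑bV with h𝒞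
    have key : ∀ (s : Finset (Module.Basis.ofVectorSpaceIndex F Ftil))
        (d : Module.Basis.ofVectorSpaceIndex F Ftil → D),
        (∑ j ∈ s, ι (d j) * ((𝒞 j : Ftil) : B)) = 0 → ∀ j ∈ s, d j = 0 := by
      intro s
      induction s using Finset.induction_on with
      | empty => intro d _ j hj; exact absurd hj (Finset.notMem_empty j)
      | @insert a s ha ih =>
        intro d hsum
        by_cases hda : d a = 0
        · have hsum' : ∑ j ∈ s, ι (d j) * ((𝒞 j : Ftil) : B) = 0 := by
            rwa [Finset.sum_insert ha, hda, map_zero, zero_mul, zero_add] at hsum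
          intro j hj
          rcases Finset.mem_insert.mp hj with rfl | hj
          · exact hda
          · exact ih d hsum' j hj
        · exfalso
          set u := (d a)⁻¹ with hu
          have hua : u * d a = 1 := inv_mul_cancel₀ hda
          have hsum2 : ∑ j ∈ insert a s, ι (u * d j) * ((𝒞 j : Ftil) : B) = 0 := by
            have h := congrArg (fun x => ι u * x) hsum
            simpa [Finset.mul_sum, map_mul, mul_assoc] using h
          -- commutator trick
          have hcom : ∀ y : D, ∀ j ∈ s, y * (u * d j) - (u * d j) * y = 0 := by
            intro y
            have h0 : ∑ j ∈ insert a s,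
                ι (y * (u * d j) - (u * d j) * y) * ((𝒞 j : Ftil) : B) = 0 := by
              have h := congrArg (fun x => ι y * x - x * ι y) hsum2
              simp only [mul_zero, zero_mul, sub_zero, Finset.mul_sum, Finset.sum_mul,
                ← Finset.sum_sub_distrib] at h
              rw [← h]
              apply Finset.sum_congr rfl
              intro j hj
              have hc : ((𝒞 j : Ftil) : B) * ι y = ι y * ((𝒞 j : Ftil) : B) :=
                (hcent _ (𝒞 j).2 y).symm
              have hw : ι (u * d j) * ((𝒞 j : Ftil) : B) * ι y
                  = ι (u * d j) * ι y * ((𝒞 j : Ftil) : B) := by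
                rw [mul_assoc, hc, ← mul_assoc]
              rw [map_sub, sub_mul, map_mul ι y (u * d j), map_mul ι (u * d j) y, hw,
                ← mul_assoc]
            rw [Finset.sum_insert ha] at h0
            have hzero : y * (u * d a) - (u * d a) * y = 0 := by
              rw [hua, mul_one, one_mul, sub_self]
            rw [hzero, map_zero, zero_mul, zero_add] at h0
            exact ih _ h0
          -- so u * d j is central for every j in insert a s
          have hcentral : ∀ j ∈ insert a s, ∃ c : F, algebraMap F D c = u * d j := by
            intro j hj
            rcases Finset.mem_insert.mp hj with rfl | hj
            · exact ⟨1, by rw [map_one, hua]⟩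
            · have : u * d j ∈ Subalgebra.center F D := by
                rw [Subalgebra.mem_center_iff]
                intro y
                have := hcom y j hj
                rw [sub_eq_zero] at this
                exact this
              rw [Algebra.IsCentral.center_eq_bot, Algebra.mem_bot] at this
              obtain ⟨c, hc⟩ := this
              exact ⟨c, hc⟩
          set c : Module.Basis.ofVectorSpaceIndex F Ftil → F :=
            fun j => if h : j ∈ insert a s then (hcentral j h).choose else 0 with hcdef
          have hc : ∀ j ∈ insert a s, algebraMap F D (c j) = u * d j := by
            intro j hj
            simp only [hcdef, dif_pos hj]
            exact (hcentral j hj).choose_spec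
          have hzero : ∑ j ∈ insert a s, c j • 𝒞 j = 0 := by
            apply Subtype.coe_injective
            push_cast
            rw [← hsum2]
            apply Finset.sum_congr rfl
            intro j hj
            rw [hsmul, hc j hj]
          have hall := linearIndependent_iff'.mp hli (insert a s) c hzero
          have hca := hall a (Finset.mem_insert_self a s)
          have := hc a (Finset.mem_insert_self a s)
          rw [hca, map_zero, hua] at this
          exact one_ne_zero this.symm
    -- the centralizer of ι(F) in B
    let C : Subring B := Subring.centralizer (Set.range (fun x : F => ι (algebraMap F D x)))
    have hmemC_D : ∀ d : D, ι d ∈ C := by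
      intro d
      rw [Subring.mem_centralizer_iff]
      rintro _ ⟨x, rfl⟩
      rw [← map_mul, ← map_mul, Algebra.commutes]
    have hmemC_F : ∀ t : Ftil, (t : B) ∈ C := by
      intro t
      rw [Subring.mem_centralizer_iff]
      rintro _ ⟨x, rfl⟩
      exact hcent t t.2 (algebraMap F D x)
    have hfC : ∀ x : F, f0 x ∈ C := fun x => hmemC_D _
    letI algC : Algebra F C :=
      RingHom.toAlgebra' (f0.codRestrict C hfC)
        (fun c x => Subtype.ext (x.2 _ ⟨c, rfl⟩))
    let ιC : D →ₐ[F] C :=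
      { toRingHom := ι.toRingHom.codRestrict C hmemC_D
        commutes' := fun x => rfl }
    let gC : Ftil →ₐ[F] C :=
      { toRingHom := ((Ftil.val : Ftil →ₐ[K] B) : Ftil →+* B).codRestrict C hmemC_F
        commutes' := fun x => rfl }
    have hDG : ∀ (d : D) (t : Ftil), Commute (ιC d) (gC t) :=
      fun d t => Subtype.ext (hcent t t.2 d)
    let lift := Algebra.TensorProduct.lift ιC gC hDG
    let ιtil : (D ⊗[F] Ftil) →+* B := C.subtype.comp lift.toRingHom
    have htmul : ∀ (x : D) (t : Ftil), ιtil (x ⊗ₜ[F] t) = ι x * t := by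
      intro x t
      show (C.subtype) (lift (x ⊗ₜ t)) = _
      rw [Algebra.TensorProduct.lift_tmul]
      rfl
    clear_value ιtil lift ιC gC algC C
    -- ########## injectivity ##########
    have hinj : Function.Injective ιtil := by
      rw [injective_iff_map_eq_zero]
      intro z hz
      let e := TensorProduct.equivFinsuppOfBasisRight (M := D) bV
      set b := e z with hb
      have hzz : z = b.sum fun j m => m ⊗ₜ[F] (𝒞 j : Ftil) := by
        rw [← TensorProduct.equivFinsuppOfBasisRight_symm_apply]
        exact (e.symm_apply_apply z).symm
      have h0 : ∑ j ∈ b.support, ι (b j) * ((𝒞 j : Ftil) : B) = 0 := by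
        rw [hzz, map_finsuppSum] at hz
        simpa [Finsupp.sum, htmul] using hz
      have hb0 : b = 0 := by
        ext j
        by_cases h : j ∈ b.support
        · exact key b.support (⇑b) h0 j h
        · exact Finsupp.notMem_support_iff.mp h
      exact (LinearEquiv.map_eq_zero_iff e).mp (hb ▸ hb0)
    refine ⟨algF, halg, ιtil, hinj, ?_, ?_⟩
    · intro x; rw [htmul]; simp
    · intro k z
      rw [map_mul, htmul]
      simp
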